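/- Let α ∈ (0,1] and let x ∈ (0, ᾱ) be irrational. Then for every n ≥ 0 one has β_{α,n} = |q_{α,n}·x − p_{α,n}|. -/

import Mathlib

open Set Filter

/-- The `α`-continued fraction map `A_α(x) = |1/x − ⌊1/x + 1 − α⌋|`. -/
noncomputable def Aa (α : ℝ) (x : ℝ) : ℝ := |1 / x - ⌊1 / x + 1 - α⌋|

/-- The orbit `x_{α,n}` of `x` under `A_α` (with `x_{α,0} = x`). -/
noncomputable def xa (α x : ℝ) (n : ℕ) : ℝ := (Aa α)^[n] x

/-- `betaP α x (n+1) = β_{α,n} = x_{α,0}⋯x_{α,n}`; `betaP α x 0 = β_{α,-1} = 1`. -/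
noncomputable def betaP (α x : ℝ) (n : ℕ) : ℝ := ∏ i ∈ Finset.range n, xa α x i

/-- `aa α x n = a_{α,n+1} = ⌊1/x_{α,n} + 1 − α⌋`. -/
noncomputable def aa (α x : ℝ) (n : ℕ) : ℤ := ⌊1 / xa α x n + 1 - α⌋

/-- `ea α x n = ε_{α,n}`: `ε_{α,0} = 1` and `ε_{α,n+1} = sign(1/x_{α,n} − a_{α,n+1})`. -/
noncomputable def ea (α x : ℝ) : ℕ → ℝ
  | 0 => 1
  | n + 1 => if 0 < 1 / xa α x n - aa α x n then 1 else -1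

/-- `pa α x (n+1) = p_{α,n}`; `pa α x 0 = p_{α,-1} = 1`. -/
noncomputable def pa (α x : ℝ) : ℕ → ℝ
  | 0 => 1
  | 1 => 0
  | n + 2 => aa α x n * pa α x (n + 1) + ea α x n * pa α x n

/-- `qa α x (n+1) = q_{α,n}`; `qa α x 0 = q_{α,-1} = 0`. -/
noncomputable def qa (α x : ℝ) : ℕ → ℝ
  | 0 => 0
  | 1 => 1
  | n + 2 => aa α x n * qa α x (n + 1) + ea α x n * qa α x n

/-!
Write `D_n = q_{α,n} x − p_{α,n}`. Both `p` and `q` obey the recurrence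
`u_{n+1} = a_{α,n+1} u_n + ε_{α,n} u_{n−1}`, hence so does `D`, and since
`ε_{α,n+1} x_{α,n+1} = 1/x_{α,n} − a_{α,n+1}` an induction gives the one-step relation
`D_{n+1} = −ε_{α,n} x_{α,n} D_n`. Taking absolute values, `|D_{n+1}| = x_{α,n} |D_n|`
with `|D_{−1}| = 1`, which is the recursion defining `β`.
-/

section ContinuedFraction

variable (α x : ℝ)

lemma xa_succ (n : ℕ) : xa α x (n + 1) = |1 / xa α x n - aa α x n| := by
  simp only [xa, Function.iterate_succ_apply', Aa, aa]

lemma ea_succ (n : ℕ) : ea α x (n + 1) = if 0 < 1 / xa α x n - aa α x n then 1 else -1 :=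
  rfl

lemma ea_eq_one_or_neg_one (n : ℕ) : ea α x n = 1 ∨ ea α x n = -1 := by
  cases n with
  | zero => exact Or.inl rfl
  | succ n => rw [ea_succ]; split_ifs <;> simp

lemma abs_ea (n : ℕ) : |ea α x n| = 1 := by
  rcases ea_eq_one_or_neg_one α x n with h | h <;> simp [h]

lemma ea_succ_mul_xa_succ (n : ℕ) :
    ea α x (n + 1) * xa α x (n + 1) = 1 / xa α x n - aa α x n := by
  rw [xa_succ, ea_succ]
  split_ifs with h
  · rw [abs_of_pos h, one_mul]
  · rw [abs_of_nonpos (not_lt.mp h)]; ring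

lemma betaP_succ (n : ℕ) : betaP α x (n + 1) = betaP α x n * xa α x n :=
  Finset.prod_range_succ _ n

lemma qa_mul_sub_pa_add_two (n : ℕ) :
    qa α x (n + 2) * x - pa α x (n + 2) =
      aa α x n * (qa α x (n + 1) * x - pa α x (n + 1)) + ea α x n * (qa α x n * x - pa α x n) := by
  simp only [qa, pa]; ring

variable {x}

lemma xa_nonneg (hx : 0 ≤ x) (n : ℕ) : 0 ≤ xa α x n := by
  cases n with
  | zero => exact hx
  | succ n => rw [xa_succ]; exact abs_nonneg _

lemma irrational_xa (hx : Irrational x) (n : ℕ) : Irrational (xa α x n) := by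
  induction n with
  | zero => exact hx
  | succ n ih =>
    have h : Irrational (1 / xa α x n - aa α x n) := by
      simpa only [one_div] using ih.inv.sub_intCast (aa α x n)
    rw [xa_succ]
    rcases abs_choice (1 / xa α x n - aa α x n) with habs | habs <;> rw [habs]
    exacts [h, h.neg]

variable {α}

lemma qa_mul_sub_pa_succ (hx : ∀ n, xa α x n ≠ 0) (n : ℕ) :
    qa α x (n + 1) * x - pa α x (n + 1) = -(ea α x n * xa α x n) * (qa α x n * x - pa α x n) := by
  induction n with
  | zero => simp [qa, pa, ea, xa]
  | succ n ih =>
    rw [qa_mul_sub_pa_add_two, ea_succ_mul_xa_succ, ih]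
    field_simp [hx n]
    ring

lemma abs_qa_mul_sub_pa (hx₀ : 0 ≤ x) (hx : ∀ n, xa α x n ≠ 0) (n : ℕ) :
    |qa α x n * x - pa α x n| = betaP α x n := by
  induction n with
  | zero => simp [qa, pa, betaP]
  | succ n ih =>
    rw [qa_mul_sub_pa_succ hx, abs_mul, abs_neg, abs_mul, abs_ea, one_mul,
      abs_of_nonneg (xa_nonneg α hx₀ n), ih, betaP_succ, mul_comm]

end ContinuedFraction

theorem beta_eq_abs_qx_sub_p (α : ℝ) (x : ℝ)
    (hirr : Irrational x) (hx : x ∈ Set.Ioo 0 (max α (1 - α))) (n : ℕ) :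
    betaP α x (n + 1) = |qa α x (n + 1) * x - pa α x (n + 1)| :=
  (abs_qa_mul_sub_pa hx.1.le (fun k => (irrational_xa α hirr k).ne_zero) (n + 1)).symm
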